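/- arXiv:1908.00112 — 8 statements merged into one kernel-verified Lean document; each statement's English description precedes it below -/
import Mathlib

section
/- Given a sequential plan P solving a planning problem, there exists a plan P* satisfying the make-progress rule (no later state is a subset of any earlier state) with total action cost at most that of P and makespan at most that of P. -/
structure Strips (F A : Type) where
  init : Set F
  goal : Set F
  pre : A → Set F
  add : A → Set F
  del : A → Set F
  cost : A → ℕ

def Strips.step {F A : Type} (Q : Strips F A) (s : Set F) (a : A) : Set F :=
  (s \ Q.del a) ∪ Q.add a

def Strips.run {F A : Type} (Q : Strips F A) (s : Set F) (p : List A) : Set F :=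
  p.foldl Q.step s

def Strips.ValidFrom {F A : Type} (Q : Strips F A) : Set F → List A → Prop
  | _, [] => True
  | s, a :: p => Q.pre a ⊆ s ∧ Q.ValidFrom (Q.step s a) p

def Strips.Solves {F A : Type} (Q : Strips F A) (p : List A) : Prop :=
  Q.ValidFrom Q.init p ∧ Q.goal ⊆ Q.run Q.init p

def Strips.planCost {F A : Type} (Q : Strips F A) (p : List A) : ℕ :=
  (p.map Q.cost).sum

/-- The layered make-progress rule: in the induced state sequence, no state at a
later index is a subset of a state at an earlier index. -/
def Strips.MakesProgress {F A : Type} (Q : Strips F A) (s : Set F) (p : List A) : Prop :=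
  ∀ i j : ℕ, i < j → j ≤ p.length → ¬ Q.run s (p.take j) ⊆ Q.run s (p.take i)

/-- The delete-free relaxation: all delete-effects removed. -/
def Strips.relax {F A : Type} (Q : Strips F A) : Strips F A :=
  { Q with del := fun _ => ∅ }

/-!
If the make-progress rule fails for indices `i < j`, the state reached after `j` steps is
contained in the state reached after `i` steps. Progression in STRIPS is monotone in the state,
so cutting out the actions `i, …, j - 1` leaves a plan that is still applicable and ends in a
superset of the original final state; it is a sublist of the original plan, hence strictly
shorter and no more expensive. Repeating this terminates because the length decreases.
-/

theorem List.take_append_drop_sublist {α : Type*} (p : List α) {i j : ℕ} (hij : i ≤ j) :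
    (p.take i ++ p.drop j).Sublist p := by
  have h := (List.take_sublist_take_left (l := p) hij).append (List.Sublist.refl (p.drop j))
  rwa [List.take_append_drop] at h

theorem List.length_take_append_drop_lt {α : Type*} (p : List α) {i j : ℕ} (hij : i < j)
    (hj : j ≤ p.length) : (p.take i ++ p.drop j).length < p.length := by
  simp only [List.length_append, List.length_take, List.length_drop]
  omega

namespace Strips

variable {F A : Type} (Q : Strips F A)

theorem run_append (s : Set F) (p q : List A) : Q.run s (p ++ q) = Q.run (Q.run s p) q :=
  List.foldl_append

theorem step_mono {s t : Set F} (h : s ⊆ t) (a : A) : Q.step s a ⊆ Q.step t a :=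
  Set.union_subset_union_left _ (Set.sdiff_subset_sdiff_left h)

theorem run_mono : ∀ (p : List A) {s t : Set F}, s ⊆ t → Q.run s p ⊆ Q.run t p
  | [], _, _, h => h
  | a :: p, _, _, h => run_mono p (Q.step_mono h a)

theorem validFrom_mono : ∀ (p : List A) {s t : Set F}, s ⊆ t → Q.ValidFrom s p → Q.ValidFrom t p
  | [], _, _, _, _ => trivial
  | a :: p, _, _, h, ⟨hpre, hrest⟩ => ⟨hpre.trans h, validFrom_mono p (Q.step_mono h a) hrest⟩

theorem validFrom_append (p q : List A) (s : Set F) :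
    Q.ValidFrom s (p ++ q) ↔ Q.ValidFrom s p ∧ Q.ValidFrom (Q.run s p) q := by
  induction p generalizing s with
  | nil => simp [ValidFrom, run]
  | cons a p ih => simp [ValidFrom, run, ih, and_assoc]

theorem planCost_le_of_sublist {p q : List A} (h : p.Sublist q) : Q.planCost p ≤ Q.planCost q :=
  (h.map Q.cost).sum_le_sum fun _ _ => Nat.zero_le _

section LoopRemoval

variable {s : Set F} {p : List A} {i j : ℕ}

theorem validFrom_take_append_drop (hp : Q.ValidFrom s p)
    (hloop : Q.run s (p.take j) ⊆ Q.run s (p.take i)) :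
    Q.ValidFrom s (p.take i ++ p.drop j) := by
  have hi := (Q.validFrom_append _ _ s).mp ((List.take_append_drop i p).symm ▸ hp)
  have hj := (Q.validFrom_append _ _ s).mp ((List.take_append_drop j p).symm ▸ hp)
  exact (Q.validFrom_append _ _ s).mpr ⟨hi.1, Q.validFrom_mono _ hloop hj.2⟩

theorem run_subset_run_take_append_drop (hloop : Q.run s (p.take j) ⊆ Q.run s (p.take i)) :
    Q.run s p ⊆ Q.run s (p.take i ++ p.drop j) := by
  conv_lhs => rw [← List.take_append_drop j p]
  rw [run_append, run_append]
  exact Q.run_mono _ hloop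

theorem Solves.take_append_drop (hp : Q.Solves p)
    (hloop : Q.run Q.init (p.take j) ⊆ Q.run Q.init (p.take i)) :
    Q.Solves (p.take i ++ p.drop j) :=
  ⟨Q.validFrom_take_append_drop hp.1 hloop,
    hp.2.trans (Q.run_subset_run_take_append_drop hloop)⟩

end LoopRemoval

end Strips

/-- Given a sequential plan solving a planning problem, there exists a plan satisfying
the make-progress rule with total cost at most that of the given plan and makespan
(length) at most that of the given plan. -/
theorem exists_progress_plan {F A : Type} (Q : Strips F A) (P : List A)
    (hP : Q.Solves P) :
    ∃ P' : List A, Q.Solves P' ∧ Q.MakesProgress Q.init P' ∧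
      Q.planCost P' ≤ Q.planCost P ∧ P'.length ≤ P.length := by
  induction hn : P.length using Nat.strong_induction_on generalizing P with
  | _ n ih =>
    by_cases hprog : Q.MakesProgress Q.init P
    · exact ⟨P, hP, hprog, le_rfl, hn.le⟩
    obtain ⟨i, j, hij, hj, hloop⟩ : ∃ i j, i < j ∧ j ≤ P.length ∧
        Q.run Q.init (P.take j) ⊆ Q.run Q.init (P.take i) := by
      simpa [Strips.MakesProgress] using hprog
    have hshorter := P.length_take_append_drop_lt hij hj
    obtain ⟨P', hsolves, hprog', hcost, hlen⟩ :=
      ih _ (hn ▸ hshorter) _ (hP.take_append_drop Q hloop) rfl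
    exact ⟨P', hsolves, hprog', hcost.trans (Q.planCost_le_of_sublist
      (P.take_append_drop_sublist hij.le)), hn ▸ hlen.trans hshorter.le⟩
end

section
/- If a planning problem is solvable, then it has a cost-optimal solution that satisfies the make-progress rule. -/
namespace StripsAux

variable {F A : Type} (Q : Strips F A)

lemma run_append (s : Set F) (p q : List A) :
    Q.run s (p ++ q) = Q.run (Q.run s p) q := by
  simp [Strips.run, List.foldl_append]

lemma validFrom_append (s : Set F) (p q : List A) :
    Q.ValidFrom s (p ++ q) ↔ Q.ValidFrom s p ∧ Q.ValidFrom (Q.run s p) q := by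
  induction p generalizing s with
  | nil => simp [Strips.ValidFrom, Strips.run]
  | cons a p ih =>
      simp [Strips.ValidFrom, ih, Strips.run, and_assoc]

lemma step_mono {s t : Set F} (h : s ⊆ t) (a : A) : Q.step s a ⊆ Q.step t a := by
  intro x hx
  rcases hx with hx | hx
  · exact Or.inl ⟨h hx.1, hx.2⟩
  · exact Or.inr hx

lemma run_mono {s t : Set F} (h : s ⊆ t) (p : List A) : Q.run s p ⊆ Q.run t p := by
  induction p generalizing s t with
  | nil => exact h
  | cons a p ih => exact ih (step_mono Q h a)

lemma validFrom_mono {s t : Set F} (h : s ⊆ t) {p : List A}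
    (hv : Q.ValidFrom s p) : Q.ValidFrom t p := by
  induction p generalizing s t with
  | nil => trivial
  | cons a p ih => exact ⟨hv.1.trans h, ih (step_mono Q h a) hv.2⟩

lemma planCost_append (p q : List A) :
    Q.planCost (p ++ q) = Q.planCost p + Q.planCost q := by
  simp [Strips.planCost]

end StripsAux

open StripsAux

/-- If a planning problem is solvable, then it has a cost-optimal solution that
satisfies the make-progress rule. -/
theorem exists_optimal_progress_plan {F A : Type} (Q : Strips F A)
    (hsolv : ∃ P : List A, Q.Solves P) :
    ∃ P : List A, Q.Solves P ∧ Q.MakesProgress Q.init P ∧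
      ∀ P' : List A, Q.Solves P' → Q.planCost P ≤ Q.planCost P' := by
  -- minimal cost
  have hc : ∃ c : ℕ, ∃ p : List A, Q.Solves p ∧ Q.planCost p = c := by
    obtain ⟨p, hp⟩ := hsolv; exact ⟨Q.planCost p, p, hp, rfl⟩
  classical
  set c := Nat.find hc with hcdef
  obtain ⟨p₀, hp₀, hp₀c⟩ := Nat.find_spec hc
  have hcmin : ∀ p : List A, Q.Solves p → c ≤ Q.planCost p := by
    intro p hp
    exact Nat.find_le ⟨p, hp, rfl⟩
  -- minimal length among plans of cost c
  have hl : ∃ l : ℕ, ∃ p : List A, (Q.Solves p ∧ Q.planCost p = c) ∧ p.length = l :=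
    ⟨p₀.length, p₀, ⟨hp₀, hp₀c⟩, rfl⟩
  obtain ⟨P, ⟨hP, hPc⟩, hPl⟩ := Nat.find_spec hl
  have hlmin : ∀ p : List A, Q.Solves p → Q.planCost p = c → P.length ≤ p.length := by
    intro p hp hpc
    rw [hPl]
    exact Nat.find_le ⟨p, ⟨hp, hpc⟩, rfl⟩
  refine ⟨P, hP, ?_, fun P' hP' => hPc ▸ hcmin P' hP'⟩
  -- makes progress
  intro i j hij hjlen hsub
  -- new plan
  set P' := P.take i ++ P.drop j with hP'def
  have hij' : i ≤ j := le_of_lt hij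
  have hsplit_j : P = P.take j ++ P.drop j := (List.take_append_drop j P).symm
  have hsplit_i : P = P.take i ++ P.drop i := (List.take_append_drop i P).symm
  -- validity
  obtain ⟨hval, hgoal⟩ := hP
  have hvalj : Q.ValidFrom Q.init (P.take j) ∧
      Q.ValidFrom (Q.run Q.init (P.take j)) (P.drop j) := by
    rw [hsplit_j] at hval
    exact (validFrom_append Q _ _ _).mp hval
  have hvali : Q.ValidFrom Q.init (P.take i) := by
    have : P.take j = P.take i ++ (P.take j).drop i := by
      conv_lhs => rw [← List.take_append_drop i (P.take j)]
      rw [List.take_take, min_eq_left hij']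
    have h2 := hvalj.1
    rw [this] at h2
    exact ((validFrom_append Q _ _ _).mp h2).1
  have hvalP' : Q.ValidFrom Q.init P' := by
    rw [hP'def, validFrom_append]
    exact ⟨hvali, validFrom_mono Q hsub hvalj.2⟩
  have hgoalP' : Q.goal ⊆ Q.run Q.init P' := by
    have h1 : Q.run Q.init P = Q.run (Q.run Q.init (P.take j)) (P.drop j) := by
      conv_lhs => rw [hsplit_j]
      rw [run_append]
    rw [h1] at hgoal
    rw [hP'def, run_append]
    exact hgoal.trans (run_mono Q hsub (P.drop j))
  have hsolP' : Q.Solves P' := ⟨hvalP', hgoalP'⟩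
  -- cost of P' ≤ c
  have hcostle : Q.planCost P' ≤ c := by
    have hdd : (P.drop i).drop (j - i) = P.drop j := by
      rw [List.drop_drop]
      congr 1
      omega
    have hdropsplit : P.drop i = (P.drop i).take (j - i) ++ P.drop j := by
      conv_lhs => rw [← List.take_append_drop (j - i) (P.drop i)]
      rw [hdd]
    have h1 : Q.planCost P = Q.planCost (P.take i) + Q.planCost (P.drop i) := by
      conv_lhs => rw [hsplit_i]
      rw [planCost_append]
    have h2 : Q.planCost (P.drop i) =
        Q.planCost ((P.drop i).take (j - i)) + Q.planCost (P.drop j) := by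
      conv_lhs => rw [hdropsplit]
      rw [planCost_append]
    rw [hP'def, planCost_append]
    omega
  have hcostP' : Q.planCost P' = c :=
    le_antisymm hcostle (hcmin P' hsolP')
  -- length contradiction
  have hlenlt : P'.length < P.length := by
    have : P'.length = i + (P.length - j) := by
      rw [hP'def]
      simp [List.length_take, List.length_drop, min_eq_left (hij'.trans hjlen)]
    omega
  exact absurd (hlmin P' hsolP' hcostP') (by omega)
end

section
/- If a STRIPS planning problem Q has a solution plan P, then the delete-free relaxation of Q (where all delete-effects are removed) is solved by executing the distinct actions of P in order of first occurrence, and the cost of this relaxed plan is at most the cost of P. -/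
/-- The distinct actions of a list, in order of first occurrence. -/
def firstDedup {A : Type} [DecidableEq A] : List A → List A
  | [] => []
  | a :: l => a :: firstDedup (l.filter (· ≠ a))
termination_by l => l.length
decreasing_by
  simp only [List.length_cons]
  first
  | exact Nat.lt_succ_of_le (List.length_filter_le _ _)
  | exact Nat.lt_succ_of_le (List.length_unattach ▸ (List.length_filter_le _ _).trans List.length_attach.le)
  | (simp only [List.length_unattach]; exact Nat.lt_succ_of_le ((List.length_filter_le _ _).trans List.length_attach.le))
  | grind [List.length_filter_le, List.length_unattach, List.length_attach]


/-!
Dropping delete effects only enlarges the states along an execution, so `P` remains applicable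
in the relaxation and still reaches the goal. In a delete-free problem a repeated action is
applicable (the state only grew since its first occurrence) and changes nothing (its add effects
are already present), so removing repetitions preserves applicability and the final state. Finally
`firstDedup P` is a sublist of `P`, so it costs no more.
-/

theorem firstDedup_sublist {A : Type} [DecidableEq A] : ∀ l : List A, (firstDedup l).Sublist l
  | [] => by rw [firstDedup]
  | a :: l => by
    rw [firstDedup]
    exact ((firstDedup_sublist _).trans List.filter_sublist).cons_cons a
termination_by l => l.length
decreasing_by exact Nat.lt_succ_of_le (List.length_filter_le _ _)

namespace Strips

variable {F A : Type} (Q : Strips F A)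

theorem relax_step (t : Set F) (a : A) : Q.relax.step t a = t ∪ Q.add a := by
  simp [relax, step]

theorem subset_relax_step (t : Set F) (a : A) : t ⊆ Q.relax.step t a := by
  rw [relax_step]
  exact Set.subset_union_left

theorem add_subset_relax_step_of_decide_ne_eq_false [DecidableEq A] {t : Set F} (a b : A)
    (h : decide (b ≠ a) = false) : Q.add b ⊆ Q.relax.step t a := by
  rw [of_not_not (of_decide_eq_false h), relax_step]
  exact Set.subset_union_right

theorem relax_step_of_add_subset {t : Set F} {a : A} (h : Q.add a ⊆ t) :
    Q.relax.step t a = t := by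
  rw [relax_step, Set.union_eq_left.mpr h]

theorem step_subset_relax_step {s t : Set F} (hst : s ⊆ t) (a : A) :
    Q.step s a ⊆ Q.relax.step t a := by
  rw [relax_step]
  exact Set.union_subset_union (Set.sdiff_subset.trans hst) le_rfl

theorem run_subset_relax_run {s t : Set F} (hst : s ⊆ t) (l : List A) :
    Q.run s l ⊆ Q.relax.run t l := by
  induction l generalizing s t with
  | nil => exact hst
  | cons a l ih => exact ih (Q.step_subset_relax_step hst a)

theorem relax_run_filter {t : Set F} {p : A → Bool} (hp : ∀ a, p a = false → Q.add a ⊆ t)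
    (l : List A) : Q.relax.run t (l.filter p) = Q.relax.run t l := by
  induction l generalizing t with
  | nil => rfl
  | cons a l ih =>
    by_cases ha : p a
    · rw [List.filter_cons_of_pos ha]
      exact ih fun b hb => (hp b hb).trans (Q.subset_relax_step t a)
    · rw [List.filter_cons_of_neg ha]
      change _ = Q.relax.run (Q.relax.step t a) l
      rw [Q.relax_step_of_add_subset (hp a (by simpa using ha))]
      exact ih hp

theorem relax_run_firstDedup [DecidableEq A] : ∀ (t : Set F) (l : List A),
    Q.relax.run t (firstDedup l) = Q.relax.run t l
  | _, [] => by rw [firstDedup]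
  | t, a :: l => by
    rw [firstDedup]
    change Q.relax.run (Q.relax.step t a) _ = Q.relax.run (Q.relax.step t a) l
    rw [relax_run_firstDedup, Q.relax_run_filter (Q.add_subset_relax_step_of_decide_ne_eq_false a)]
termination_by _ l => l.length
decreasing_by exact Nat.lt_succ_of_le (List.length_filter_le _ _)

variable {Q}

theorem ValidFrom.relax {s t : Set F} {l : List A} (hst : s ⊆ t) (h : Q.ValidFrom s l) :
    Q.relax.ValidFrom t l := by
  induction l generalizing s t with
  | nil => trivial
  | cons a l ih => exact ⟨h.1.trans hst, ih (Q.step_subset_relax_step hst a) h.2⟩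

theorem ValidFrom.relax_filter {t : Set F} {p : A → Bool} (hp : ∀ a, p a = false → Q.add a ⊆ t)
    {l : List A} (h : Q.relax.ValidFrom t l) : Q.relax.ValidFrom t (l.filter p) := by
  induction l generalizing t with
  | nil => trivial
  | cons a l ih =>
    by_cases ha : p a
    · rw [List.filter_cons_of_pos ha]
      exact ⟨h.1, ih (fun b hb => (hp b hb).trans (Q.subset_relax_step t a)) h.2⟩
    · rw [List.filter_cons_of_neg ha]
      have h' := h.2
      rw [Q.relax_step_of_add_subset (hp a (by simpa using ha))] at h'
      exact ih hp h'

theorem ValidFrom.relax_firstDedup [DecidableEq A] : ∀ {t : Set F} {l : List A},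
    Q.relax.ValidFrom t l → Q.relax.ValidFrom t (firstDedup l)
  | _, [], _ => by rw [firstDedup]; trivial
  | _, a :: l, h => by
    rw [firstDedup]
    exact ⟨h.1, ValidFrom.relax_firstDedup
      (h.2.relax_filter (Q.add_subset_relax_step_of_decide_ne_eq_false a))⟩
termination_by _ l => l.length
decreasing_by exact Nat.lt_succ_of_le (List.length_filter_le _ _)

end Strips

/-- If a STRIPS planning problem `Q` has a solution plan `P`, then the delete-free
relaxation of `Q` is solved by executing the distinct actions of `P` in order of
first occurrence, and the cost of this relaxed plan is at most the cost of `P`. -/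
theorem relax_solved_by_firstDedup {F A : Type} [DecidableEq A]
    (Q : Strips F A) (P : List A) (hP : Q.Solves P) :
    Q.relax.Solves (firstDedup P) ∧ Q.relax.planCost (firstDedup P) ≤ Q.planCost P := by
  obtain ⟨hvalid, hgoal⟩ := hP
  refine ⟨⟨(hvalid.relax le_rfl).relax_firstDedup, ?_⟩, ?_⟩
  · rw [Strips.relax_run_firstDedup]
    exact hgoal.trans (Q.run_subset_relax_run le_rfl P)
  · exact ((firstDedup_sublist P).map Q.cost).sum_le_sum fun _ _ => Nat.zero_le _
end

section
/- If G* is an acyclic subgraph solving the delete-free graph problem, then any topological sort of the actions X* of G* yields a valid plan for the delete-free planning problem achieving the goals, with total cost equal to the sum of weights of actions in X*. -/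
/-- A directed bipartite graph: `X` actions, `Y` (non-initial) fluents; edges
`(x,y)` are add-effects (`addE`), edges `(y,x)` are preconditions (`preE`),
with weights on `X` and a goal set `Y_F ⊆ Y`. -/
structure DFGraph (X Y : Type) where
  addE : X → Y → Prop
  preE : Y → X → Prop
  w : X → ℕ
  goalY : Set Y

/-- The delete-free planning problem corresponding to a graph: actions `X`, fluents
`Y` with empty initial state, preconditions the `(y,x)` edges, add-effects the
`(x,y)` edges, no delete-effects, goals `Y_F`. -/
def DFGraph.toStrips {X Y : Type} (G : DFGraph X Y) : Strips Y X where
  init := ∅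
  goal := G.goalY
  pre := fun x => {y | G.preE y x}
  add := fun x => {y | G.addE x y}
  del := fun _ => ∅
  cost := G.w

/-- One-step edge relation of a subgraph, on the disjoint union of actions and
fluents. -/
def DFGraph.SubStep {X Y : Type} (_ : DFGraph X Y)
    (EaddS : X → Y → Prop) (EpreS : Y → X → Prop) : X ⊕ Y → X ⊕ Y → Prop
  | Sum.inl x, Sum.inr y => EaddS x y
  | Sum.inr y, Sum.inl x => EpreS y x
  | _, _ => False

/-- A subgraph `G* = (X*, Y*, E*)` of `G` satisfying: (1) the goals lie in `Y*`;
(2) if `x ∈ X*` and `(y,x) ∈ E` then `y ∈ Y*` and `(y,x) ∈ E*`; (3) every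
`y ∈ Y*` has an incoming edge `(x,y) ∈ E*` with `x ∈ X*`; and `G*` acyclic. -/
structure DFGraph.GoodSub {X Y : Type} (G : DFGraph X Y) where
  Xs : Set X
  Ys : Set Y
  EaddS : X → Y → Prop
  EpreS : Y → X → Prop
  addS_sub : ∀ x y, EaddS x y → G.addE x y ∧ x ∈ Xs ∧ y ∈ Ys
  preS_sub : ∀ y x, EpreS y x → G.preE y x ∧ x ∈ Xs ∧ y ∈ Ys
  goal_sub : G.goalY ⊆ Ys
  pre_closed : ∀ x ∈ Xs, ∀ y, G.preE y x → y ∈ Ys ∧ EpreS y x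
  caused : ∀ y ∈ Ys, ∃ x, EaddS x y
  acyclic : ∀ v : X ⊕ Y, ¬ Relation.TransGen (G.SubStep EaddS EpreS) v v

lemma dfg_run_eq {X Y : Type} (G : DFGraph X Y) :
    ∀ (l : List X) (s : Set Y), G.toStrips.run s l = s ∪ {y | ∃ x ∈ l, G.addE x y} := by
  intro l
  induction l with
  | nil => intro s; simp [Strips.run]
  | cons a p ih =>
    intro s
    show G.toStrips.run (G.toStrips.step s a) p = _
    rw [ih]
    ext y
    simp [Strips.step, DFGraph.toStrips]
    tauto

lemma validFrom_of_aux {F A : Type} (Q : Strips F A) :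
    ∀ (l : List A) (s : Set F),
      (∀ l₁ x l₂, l = l₁ ++ x :: l₂ → Q.pre x ⊆ Q.run s l₁) → Q.ValidFrom s l := by
  intro l
  induction l with
  | nil => intro s _; trivial
  | cons a p ih =>
    intro s h
    refine ⟨?_, ih _ ?_⟩
    · have := h [] a p rfl
      simpa [Strips.run] using this
    · intro l₁ x l₂ hp
      have := h (a :: l₁) x l₂ (by simp [hp])
      simpa [Strips.run] using this

/-- If `G*` is an acyclic subgraph solving the delete-free graph problem, then any
topological sort `L` of its actions `X*` yields a valid plan for the corresponding
delete-free planning problem achieving the goals, with total cost equal to the sum of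
the weights of the actions in `X*`. -/
theorem dfGraph_topoSort_plan {X Y : Type} [DecidableEq X] (G : DFGraph X Y)
    (Gs : G.GoodSub) (L : List X)
    (hnodup : L.Nodup)
    (hmem : ∀ x : X, x ∈ L ↔ x ∈ Gs.Xs)
    (htopo : L.Pairwise fun x x' =>
      ¬ Relation.TransGen (G.SubStep Gs.EaddS Gs.EpreS) (Sum.inl x') (Sum.inl x)) :
    G.toStrips.Solves L ∧ G.toStrips.planCost L = ∑ x ∈ L.toFinset, G.w x := by
  refine ⟨⟨?_, ?_⟩, ?_⟩
  · apply validFrom_of_aux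
    intro l₁ x l₂ hL y hy
    have hy' : G.preE y x := hy
    have hxL : x ∈ L := by rw [hL]; simp
    have hxXs : x ∈ Gs.Xs := (hmem x).1 hxL
    obtain ⟨hyYs, hpreS⟩ := Gs.pre_closed x hxXs y hy'
    obtain ⟨x', hadd⟩ := Gs.caused y hyYs
    obtain ⟨hGadd, hx'Xs, -⟩ := Gs.addS_sub x' y hadd
    have htg : Relation.TransGen (G.SubStep Gs.EaddS Gs.EpreS) (Sum.inl x') (Sum.inl x) :=
      Relation.TransGen.head
        (show G.SubStep Gs.EaddS Gs.EpreS (Sum.inl x') (Sum.inr y) from hadd)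
        (Relation.TransGen.single
          (show G.SubStep Gs.EaddS Gs.EpreS (Sum.inr y) (Sum.inl x) from hpreS))
    have hx'L : x' ∈ L := (hmem x').2 hx'Xs
    have hx'l₁ : x' ∈ l₁ := by
      rw [hL] at hx'L
      rcases List.mem_append.1 hx'L with h | h
      · exact h
      · rcases List.mem_cons.1 h with h | h
        · exact absurd (h ▸ htg) (Gs.acyclic _)
        · exfalso
          rw [hL] at htopo
          have h1 := (List.pairwise_append.1 htopo).2.1
          exact (List.pairwise_cons.1 h1).1 x' h htg
    rw [dfg_run_eq]
    exact Or.inr ⟨x', hx'l₁, hGadd⟩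
  · intro y hy
    have hyYs := Gs.goal_sub hy
    obtain ⟨x', hadd⟩ := Gs.caused y hyYs
    obtain ⟨hGadd, hx'Xs, -⟩ := Gs.addS_sub x' y hadd
    rw [dfg_run_eq]
    exact Or.inr ⟨x', (hmem x').2 hx'Xs, hGadd⟩
  · show (L.map G.toStrips.cost).sum = _
    rw [List.sum_toFinset _ hnodup]
    rfl
end

section
/- Every topological sort of a canonical partially-ordered plan derived from a valid sequential plan is itself a valid sequential plan. -/
/-- The base edges of the canonical partially-ordered plan derived from sequential
plan `S`: for occurrence positions `i` preceding `j`, an edge `i ≺ j` if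
`i` adds a precondition of `j`; `j` deletes a precondition of `i`; `i` adds a
fluent `j` deletes; `i` deletes a fluent `j` adds; or `i` and `j` are
occurrences of the same action. -/
def canonBase {F A : Type} (Q : Strips F A) (S : List A)
    (i j : Fin S.length) : Prop :=
  (i : ℕ) < (j : ℕ) ∧
    ((Q.add (S.get i) ∩ Q.pre (S.get j)).Nonempty ∨
     (Q.del (S.get j) ∩ Q.pre (S.get i)).Nonempty ∨
     (Q.add (S.get i) ∩ Q.del (S.get j)).Nonempty ∨
     (Q.del (S.get i) ∩ Q.add (S.get j)).Nonempty ∨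
     S.get i = S.get j)

/-- The canonical partial order: transitive closure of the base edges. -/
def canonPrec {F A : Type} (Q : Strips F A) (S : List A) :
    Fin S.length → Fin S.length → Prop :=
  Relation.TransGen (canonBase Q S)

/-!
A fluent holds after a plan iff some action adds it and no later action deletes it without
re-adding it, or it held initially and no action deletes it without re-adding it. A
precondition `f` of the occurrence `j` was established in `S` by such a last adder `k`, or
persisted from the initial state. The canonical order keeps `k` before `j`, keeps every net
deleter of `f` that precedes `j` in the sort before `j` in `S` as well, and keeps every
adder/deleter pair of `f` in its order in `S`; hence `f` still holds when `j` is executed in the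
sorted plan. The goals are handled in the same way, with the whole plan in place of a prefix.
-/

open scoped List

namespace List

variable {α : Type} {l₁ l₂ : List α} {a m : α}

lemma pair_sublist_append_cons_of_mem_left (h : m ∈ l₁) : [m, a] <+ l₁ ++ a :: l₂ :=
  (singleton_sublist.2 h).append ((nil_sublist l₂).cons_cons a)

lemma pair_sublist_append_cons_of_mem_right (h : m ∈ l₂) : [a, m] <+ l₁ ++ a :: l₂ :=
  ((singleton_sublist.2 h).cons_cons a).trans (sublist_append_right l₁ _)

end List

namespace Strips

variable {F A ι : Type} {Q : Strips F A} {s : Set F} {f : F}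

lemma mem_step {a : A} : f ∈ Q.step s a ↔ f ∈ Q.add a ∨ (f ∈ s ∧ f ∉ Q.del a) := by
  simp only [step, Set.mem_union, Set.mem_sdiff]
  tauto

lemma run_append_cons (p₁ : List A) (a : A) (p₂ : List A) :
    Q.run s (p₁ ++ a :: p₂) = Q.run (Q.step (Q.run s p₁) a) p₂ :=
  List.foldl_append

lemma mem_run_of_mem_of_forall_not_mem_del_diff {p : List A} (hs : f ∈ s)
    (hp : ∀ b ∈ p, f ∉ Q.del b \ Q.add b) : f ∈ Q.run s p := by
  induction p generalizing s with
  | nil => exact hs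
  | cons a p ih =>
    refine ih (mem_step.2 ?_) fun b hb => hp b (List.mem_cons_of_mem a hb)
    by_cases hadd : f ∈ Q.add a
    · exact Or.inl hadd
    · exact Or.inr ⟨hs, fun hdel => hp a List.mem_cons_self ⟨hdel, hadd⟩⟩

lemma mem_run_append_cons_of_mem_add {p₁ p₂ : List A} {a : A} (ha : f ∈ Q.add a)
    (hp₂ : ∀ b ∈ p₂, f ∉ Q.del b \ Q.add b) : f ∈ Q.run s (p₁ ++ a :: p₂) := by
  rw [run_append_cons]
  exact mem_run_of_mem_of_forall_not_mem_del_diff (mem_step.2 (Or.inl ha)) hp₂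

lemma mem_run_map_cases {g : ι → A} {P : List ι} (hf : f ∈ Q.run s (P.map g)) :
    (∃ P₁ k P₂, P = P₁ ++ k :: P₂ ∧ f ∈ Q.add (g k) ∧
        ∀ m ∈ P₂, f ∉ Q.del (g m) \ Q.add (g m)) ∨
      (f ∈ s ∧ ∀ m ∈ P, f ∉ Q.del (g m) \ Q.add (g m)) := by
  induction P generalizing s with
  | nil => exact Or.inr ⟨hf, by simp⟩
  | cons i P ih =>
    rcases ih hf with ⟨P₁, k, P₂, rfl, hk, hP₂⟩ | ⟨hstep, hP⟩
    · exact Or.inl ⟨i :: P₁, k, P₂, rfl, hk, hP₂⟩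
    · rcases mem_step.1 hstep with hadd | ⟨hs, hdel⟩
      · exact Or.inl ⟨[], i, P, rfl, hadd, hP⟩
      · refine Or.inr ⟨hs, fun m hm => ?_⟩
        rcases List.mem_cons.1 hm with rfl | hm
        · exact fun h => hdel h.1
        · exact hP m hm

lemma mem_run_map_of_mem_run_map {g : ι → A} {P P' : List ι} (hf : f ∈ Q.run s (P.map g))
    (hadd : ∀ k ∈ P, f ∈ Q.add (g k) → k ∈ P')
    (hdel : ∀ m ∈ P', f ∈ Q.del (g m) \ Q.add (g m) → m ∈ P)
    (hord : ∀ k m, f ∈ Q.add (g k) → f ∈ Q.del (g m) → [m, k] <+ P → ¬ [k, m] <+ P') :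
    f ∈ Q.run s (P'.map g) := by
  rcases mem_run_map_cases hf with ⟨P₁, k, P₂, rfl, hk, hP₂⟩ | ⟨hs, hP⟩
  · obtain ⟨P₁', P₂', rfl⟩ := List.append_of_mem (hadd k (by simp) hk)
    rw [List.map_append, List.map_cons]
    refine mem_run_append_cons_of_mem_add hk ?_
    simp only [List.mem_map]
    rintro _ ⟨m, hm, rfl⟩ hmdel
    rcases List.mem_append.1 (hdel m (by simp [hm]) hmdel) with hm₁ | hm₂
    · exact hord k m hk hmdel.1 (List.pair_sublist_append_cons_of_mem_left hm₁)
        (List.pair_sublist_append_cons_of_mem_right hm)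
    · rcases List.mem_cons.1 hm₂ with rfl | hm₂
      · exact hmdel.2 hk
      · exact hP₂ m hm₂ hmdel
  · refine mem_run_of_mem_of_forall_not_mem_del_diff hs ?_
    simp only [List.mem_map]
    rintro _ ⟨m, hm, rfl⟩ hmdel
    exact hP m (hdel m hm hmdel) hmdel

lemma validFrom_iff {p : List A} :
    Q.ValidFrom s p ↔ ∀ p₁ a p₂, p = p₁ ++ a :: p₂ → Q.pre a ⊆ Q.run s p₁ := by
  induction p generalizing s with
  | nil => simp [ValidFrom]
  | cons b p ih =>
    simp only [ValidFrom, ih]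
    constructor
    · rintro ⟨hb, hp⟩ (_ | ⟨c, p₁⟩) a p₂ h <;> injection h with h₁ h₂
      · exact h₁ ▸ hb
      · exact h₁ ▸ hp p₁ a p₂ h₂
    · intro h
      exact ⟨h [] b p rfl, fun p₁ a p₂ hp => h (b :: p₁) a p₂ (by rw [hp]; rfl)⟩

end Strips

lemma lt_of_pair_sublist_finRange {n : ℕ} {a b : Fin n} (h : [a, b] <+ List.finRange n) :
    a < b :=
  List.pairwise_pair.1 ((List.pairwise_lt_finRange n).sublist h)

section Canonical

variable {F A : Type} {Q : Strips F A} {S : List A} {L : List (Fin S.length)} {f : F}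

lemma not_pair_sublist_of_canonBase (htopo : L.Pairwise fun i j => ¬ canonPrec Q S j i)
    {a b : Fin S.length} (h : canonBase Q S a b) : ¬ [b, a] <+ L :=
  fun hba => List.pairwise_pair.1 (htopo.sublist hba) (.single h)

lemma not_pair_sublist_of_mem_add_of_mem_del
    (htopo : L.Pairwise fun i j => ¬ canonPrec Q S j i) {k m : Fin S.length}
    (hk : f ∈ Q.add (S.get k)) (hm : f ∈ Q.del (S.get m)) (hmk : [m, k] <+ List.finRange _) :
    ¬ [k, m] <+ L :=
  not_pair_sublist_of_canonBase htopo
    ⟨lt_of_pair_sublist_finRange hmk, Or.inr (Or.inr (Or.inr (Or.inl ⟨f, hm, hk⟩)))⟩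

lemma mem_run_sorted_prefix_of_mem_pre (hS : Q.ValidFrom Q.init S)
    (hperm : L.Perm (List.finRange S.length))
    (htopo : L.Pairwise fun i j => ¬ canonPrec Q S j i)
    {L₁ L₂ : List (Fin S.length)} {j : Fin S.length} (hL : L = L₁ ++ j :: L₂)
    (hf : f ∈ Q.pre (S.get j)) : f ∈ Q.run Q.init (L₁.map S.get) := by
  obtain ⟨P₁, P₂, hP⟩ := List.append_of_mem (List.mem_finRange j)
  have hsrc : f ∈ Q.run Q.init (P₁.map S.get) := by
    refine Strips.validFrom_iff.1 hS _ _ (P₂.map S.get) ?_ hf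
    rw [← List.map_cons, ← List.map_append, ← hP, List.map_get_finRange]
  refine Strips.mem_run_map_of_mem_run_map hsrc (fun k hk hkadd => ?_) (fun m hm hmdel => ?_)
    fun k m hk hm hmk hkm => not_pair_sublist_of_mem_add_of_mem_del htopo hk hm
      (hmk.trans (hP ▸ List.sublist_append_left _ _))
      (hkm.trans (hL ▸ List.sublist_append_left _ _))
  · have hkj : k < j :=
      lt_of_pair_sublist_finRange (hP ▸ List.pair_sublist_append_cons_of_mem_left hk)
    have hjk := not_pair_sublist_of_canonBase htopo (a := k) ⟨hkj, Or.inl ⟨f, hkadd, hf⟩⟩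
    rcases List.mem_append.1 (hL ▸ hperm.mem_iff.2 (List.mem_finRange k)) with hk₁ | hk₂
    · exact hk₁
    · rcases List.mem_cons.1 hk₂ with rfl | hk₂
      · exact absurd hkj (lt_irrefl k)
      · exact absurd (hL ▸ List.pair_sublist_append_cons_of_mem_right hk₂) hjk
  · rcases List.mem_append.1 (hP ▸ List.mem_finRange m) with hm₁ | hm₂
    · exact hm₁
    · have hnodup : L.Nodup := hperm.nodup_iff.2 (List.nodup_finRange _)
      rcases List.mem_cons.1 hm₂ with rfl | hm₂
      · exact absurd (List.mem_cons_self) (List.disjoint_of_nodup_append (hL ▸ hnodup) hm)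
      · have hjm : j < m :=
          lt_of_pair_sublist_finRange (hP ▸ List.pair_sublist_append_cons_of_mem_right hm₂)
        exact absurd (hL ▸ List.pair_sublist_append_cons_of_mem_left hm)
          (not_pair_sublist_of_canonBase htopo ⟨hjm, Or.inr (Or.inl ⟨f, hmdel.1, hf⟩)⟩)

end Canonical

/-- Every topological sort (linear extension) of the canonical partially-ordered plan
derived from a valid sequential plan is itself a valid sequential plan. -/
theorem canon_topoSort_solves {F A : Type} (Q : Strips F A) (S : List A)
    (hS : Q.Solves S) (L : List (Fin S.length))
    (hperm : L.Perm (List.finRange S.length))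
    (htopo : L.Pairwise fun i j => ¬ canonPrec Q S j i) :
    Q.Solves (L.map S.get) := by
  refine ⟨Strips.validFrom_iff.2 fun p₁ a p₂ h f hf => ?_, fun f hf => ?_⟩
  · obtain ⟨L₁, _, rfl, rfl, hL₂⟩ := List.map_eq_append_iff.1 h
    obtain ⟨j, L₂, rfl, rfl, rfl⟩ := List.map_eq_cons_iff.1 hL₂
    exact mem_run_sorted_prefix_of_mem_pre hS.1 hperm htopo rfl hf
  · have hsrc : f ∈ Q.run Q.init ((List.finRange S.length).map S.get) := by
      rw [List.map_get_finRange]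
      exact hS.2 hf
    exact Strips.mem_run_map_of_mem_run_map hsrc
      (fun k _ _ => hperm.mem_iff.2 (List.mem_finRange k)) (fun m _ _ => List.mem_finRange m)
      fun k m hk hm hmk => not_pair_sublist_of_mem_add_of_mem_del htopo hk hm hmk
end

section
/- In any strongly minimal partially-ordered plan over a planning problem with finitely many states, the number of occurrences of any single action A is at most the number of possible states (2^n for n fluents). -/
/-- An `(s,t)`-cut of a partially-ordered plan: an s-side set containing `s` and not
`t`, such that no edge of the precedence relation goes from the t-side to the
s-side. -/
def IsCut {V : Type} (prec : V → V → Prop) (s t : V) (C : Set V) : Prop :=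
  s ∈ C ∧ t ∉ C ∧ ∀ u v, prec u v → v ∈ C → u ∈ C

/-- In any strongly minimal partially-ordered plan over a planning problem with
finitely many states, the number of occurrences of any single action `A` is at most
the number of possible states, `2 ^ n` for `n` fluents.  Here `cutState C` is the
intermediate state determined by a cut `C`, occurrences of the same action are
pairwise comparable, and strong minimality says: for any two cuts `C`, `D` such that
some occurrence is on the t-side of `C` and the s-side of `D`, some fluent is true in
the `D`-state but not the `C`-state. -/
theorem stronglyMinimal_occurrences_le {V Act F : Type} [Fintype F]
    (prec : V → V → Prop) (htrans : Transitive prec) (hirr : ∀ v, ¬ prec v v)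
    (s t : V) (act : V → Act) (cutState : Set V → Finset F) (A : Act)
    (hs : ∀ v, act v = A → prec s v) (ht : ∀ v, act v = A → prec v t)
    (hcomp : ∀ v w, act v = A → act w = A → v ≠ w → prec v w ∨ prec w v)
    (hmin : ∀ C D : Set V, IsCut prec s t C → IsCut prec s t D →
      (∃ v : V, v ∉ C ∧ v ∈ D) → ∃ f, f ∈ cutState D ∧ f ∉ cutState C) :
    {v : V | act v = A}.Finite ∧ {v : V | act v = A}.ncard ≤ 2 ^ Fintype.card F := by
  classical
  set S : Set V := {v : V | act v = A} with hS
  -- the cut associated to an occurrence v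
  have hcut : ∀ v ∈ S, IsCut prec s t {u | u ≠ v ∧ ¬ prec v u} := by
    intro v hv
    refine ⟨⟨?_, ?_⟩, ?_, ?_⟩
    · rintro rfl; exact hirr s (hs s hv)
    · intro h; exact hirr v (htrans h (hs v hv))
    · intro h; exact h.2 (ht v hv)
    · rintro u w huw ⟨hw1, hw2⟩
      refine ⟨?_, ?_⟩
      · rintro rfl; exact hw2 huw
      · intro h; exact hw2 (htrans h huw)
  -- the map v ↦ cutState of its cut is injective on S
  have hinj : Set.InjOn (fun v => cutState {u | u ≠ v ∧ ¬ prec v u}) S := by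
    intro v hv w hw heq
    dsimp only at heq
    by_contra hne
    rcases hcomp v w hv hw hne with h | h
    · obtain ⟨f, hfD, hfC⟩ := hmin _ _ (hcut v hv) (hcut w hw)
        ⟨v, fun hh => hh.1 rfl, ⟨fun e => hne e, fun e => hirr v (htrans h e)⟩⟩
      rw [heq] at hfC; exact hfC hfD
    · obtain ⟨f, hfD, hfC⟩ := hmin _ _ (hcut w hw) (hcut v hv)
        ⟨w, fun hh => hh.1 rfl, ⟨fun e => hne e.symm, fun e => hirr w (htrans h e)⟩⟩
      rw [heq] at hfD; exact hfC hfD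
  have hfin : S.Finite := Set.Finite.of_finite_image (Set.toFinite _) hinj
  refine ⟨hfin, ?_⟩
  calc S.ncard = (( fun v => cutState {u | u ≠ v ∧ ¬ prec v u}) '' S).ncard :=
        (Set.ncard_image_of_injOn hinj).symm
    _ ≤ (Set.univ : Set (Finset F)).ncard :=
        Set.ncard_le_ncard (Set.subset_univ _) (Set.toFinite _)
    _ = 2 ^ Fintype.card F := by
      rw [Set.ncard_univ, Nat.card_eq_fintype_card, Fintype.card_finset]
end

section
/- If two actions A and B are such that A deletes a fluent F that B has as a precondition, then in the reduced mutex encoding, unit propagation from happens(A,K) derives not happens(B,K) in all four cases of whether A has F as a precondition and whether B deletes F. -/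
/-- Correctness of the reduced mutex encoding: in any model of the rules defining
`used_preserved` (actions using but not deleting a fluent), `deleted_unused` (actions
deleting but not using it), and the cardinality constraint allowing at most one among
`used_preserved`, `deleted_unused`, and actions both using and deleting the fluent at
each step, if action `A₀` deletes a fluent `f` that `B` has as a precondition, then
`happens(A₀,K)` and `happens(B,K)` cannot both hold (in all four cases of whether
`A₀` has `f` as a precondition and whether `B` deletes `f`). -/
theorem mutex_encoding_correct {A F : Type}
    (pre del : A → F → Prop) (happens : A → ℕ → Prop)
    (used_preserved deleted_unused : F → ℕ → Prop)
    (r1 : ∀ a f k, happens a k → pre a f → ¬ del a f → used_preserved f k)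
    (r2 : ∀ a f k, happens a k → del a f → ¬ pre a f → deleted_unused f k)
    (r3a : ∀ f k, ¬ (used_preserved f k ∧ deleted_unused f k))
    (r3b : ∀ a f k, pre a f → del a f → happens a k →
      ¬ used_preserved f k ∧ ¬ deleted_unused f k)
    (r3c : ∀ a b f k, a ≠ b → pre a f → del a f → pre b f → del b f →
      ¬ (happens a k ∧ happens b k))
    (A₀ B : A) (f : F) (K : ℕ) (hAB : A₀ ≠ B)
    (hdel : del A₀ f) (hpre : pre B f) :
    ¬ (happens A₀ K ∧ happens B K) := by
  rintro ⟨hA, hB⟩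
  by_cases hpA : pre A₀ f
  · by_cases hdB : del B f
    · exact r3c A₀ B f K hAB hpA hdel hpre hdB ⟨hA, hB⟩
    · exact (r3b A₀ f K hpA hdel hA).1 (r1 B f K hB hpre hdB)
  · have hdu := r2 A₀ f K hA hdel hpA
    by_cases hdB : del B f
    · exact (r3b B f K hpre hdB hB).2 hdu
    · exact r3a f K ⟨r1 B f K hB hpre hdB, hdu⟩
end

section
/- In the bridge-crossing problem with six people having crossing times 1, 2, 3, 5, 10, 20, where the bridge holds at most two people, crossings require the lantern, a pair crosses at the slower person's speed, and all six must reach the far side, the minimum total crossing time is 37. -/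
/-- Crossing times of the six people: 1, 2, 3, 5, 10, 20 minutes. -/
def times : Fin 6 → ℕ := ![1, 2, 3, 5, 10, 20]

/-- `Reach onA lanternB c` means: starting from all six people and the lantern on
side A, there is a sequence of moves of total cost `c` after which exactly the people
in `onA` are on side A and the lantern is on side B iff `lanternB`.  A move takes one
or two people from the lantern's side to the other side (the lantern travels with
them) and costs the maximum of the movers' crossing times. -/
inductive Reach : Finset (Fin 6) → Bool → ℕ → Prop
  | init : Reach Finset.univ false 0
  | toB (onA : Finset (Fin 6)) (c : ℕ) (g : Finset (Fin 6)) :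
      Reach onA false c → g ⊆ onA → g.Nonempty → g.card ≤ 2 →
      Reach (onA \ g) true (c + g.sup times)
  | toA (onA : Finset (Fin 6)) (c : ℕ) (g : Finset (Fin 6)) :
      Reach onA true c → g ⊆ Finset.univ \ onA → g.Nonempty → g.card ≤ 2 →
      Reach (onA ∪ g) false (c + g.sup times)

def tblF : List ℕ := [1000, 38, 39, 35, 40, 34, 35, 31, 42, 32, 33, 29, 34, 28, 29, 25, 47, 32, 33, 29, 34, 28, 29, 25, 36, 28, 29, 25, 30, 24, 25, 21, 57, 22, 23, 19, 24, 18, 19, 15, 26, 18, 19, 15, 20, 14, 15, 11, 31, 13, 14, 10, 15, 9, 10, 6, 17, 7, 8, 4, 9, 3, 4, 0]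
def tblT : List ℕ := [37, 33, 34, 30, 33, 29, 30, 26, 31, 27, 28, 24, 27, 23, 24, 20, 31, 27, 28, 24, 27, 23, 24, 20, 27, 23, 24, 20, 23, 20, 20, 20, 21, 17, 18, 14, 17, 13, 14, 10, 17, 13, 14, 10, 13, 10, 10, 10, 12, 8, 9, 5, 8, 5, 5, 5, 6, 3, 3, 3, 2, 2, 1, 1000]

def fval (s : Finset (Fin 6)) (b : Bool) : ℕ :=
  (if b then tblT else tblF).getD (s.sum fun i => 2 ^ (i : ℕ)) 1000

set_option maxRecDepth 40000 in
lemma stepB : ∀ onA g : Finset (Fin 6), g ⊆ onA → g.Nonempty → g.card ≤ 2 →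
    fval (onA \ g) true ≤ fval onA false + g.sup times := by decide

set_option maxRecDepth 40000 in
lemma stepA : ∀ onA g : Finset (Fin 6), g ⊆ Finset.univ \ onA → g.Nonempty → g.card ≤ 2 →
    fval (onA ∪ g) false ≤ fval onA true + g.sup times := by decide

lemma key : ∀ s b c, Reach s b c → fval s b ≤ c := by
  intro s b c h
  induction h with
  | init => decide
  | toB onA c g _ hsub hne hcard ih =>
      exact le_trans (stepB onA g hsub hne hcard) (Nat.add_le_add_right ih _)
  | toA onA c g _ hsub hne hcard ih =>
      exact le_trans (stepA onA g hsub hne hcard) (Nat.add_le_add_right ih _)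

/-- In the bridge-crossing problem with six people having crossing times
1, 2, 3, 5, 10, 20, the minimum total time to get everyone across is 37. -/
theorem bridge_crossing_optimal : IsLeast {c : ℕ | ∃ b : Bool, Reach ∅ b c} 37 := by
  constructor
  · refine ⟨true, ?_⟩
    have h1 : Reach ({2, 3, 4, 5} : Finset (Fin 6)) true 2 := by
      have h := Reach.toB Finset.univ 0 ({0, 1} : Finset (Fin 6)) Reach.init (by decide) (by decide) (by decide)
      have e1 : Finset.univ \ ({0, 1} : Finset (Fin 6)) = ({2, 3, 4, 5} : Finset (Fin 6)) := by decide
      have e2 : 0 + ({0, 1} : Finset (Fin 6)).sup times = 2 := by decide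
      rw [e1, e2] at h; exact h
    have h2 : Reach ({0, 2, 3, 4, 5} : Finset (Fin 6)) false 3 := by
      have h := Reach.toA ({2, 3, 4, 5} : Finset (Fin 6)) 2 ({0} : Finset (Fin 6)) h1 (by decide) (by decide) (by decide)
      have e1 : ({2, 3, 4, 5} : Finset (Fin 6)) ∪ ({0} : Finset (Fin 6)) = ({0, 2, 3, 4, 5} : Finset (Fin 6)) := by decide
      have e2 : 2 + ({0} : Finset (Fin 6)).sup times = 3 := by decide
      rw [e1, e2] at h; exact h
    have h3 : Reach ({3, 4, 5} : Finset (Fin 6)) true 6 := by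
      have h := Reach.toB ({0, 2, 3, 4, 5} : Finset (Fin 6)) 3 ({0, 2} : Finset (Fin 6)) h2 (by decide) (by decide) (by decide)
      have e1 : ({0, 2, 3, 4, 5} : Finset (Fin 6)) \ ({0, 2} : Finset (Fin 6)) = ({3, 4, 5} : Finset (Fin 6)) := by decide
      have e2 : 3 + ({0, 2} : Finset (Fin 6)).sup times = 6 := by decide
      rw [e1, e2] at h; exact h
    have h4 : Reach ({0, 3, 4, 5} : Finset (Fin 6)) false 7 := by
      have h := Reach.toA ({3, 4, 5} : Finset (Fin 6)) 6 ({0} : Finset (Fin 6)) h3 (by decide) (by decide) (by decide)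
      have e1 : ({3, 4, 5} : Finset (Fin 6)) ∪ ({0} : Finset (Fin 6)) = ({0, 3, 4, 5} : Finset (Fin 6)) := by decide
      have e2 : 6 + ({0} : Finset (Fin 6)).sup times = 7 := by decide
      rw [e1, e2] at h; exact h
    have h5 : Reach ({0, 3} : Finset (Fin 6)) true 27 := by
      have h := Reach.toB ({0, 3, 4, 5} : Finset (Fin 6)) 7 ({4, 5} : Finset (Fin 6)) h4 (by decide) (by decide) (by decide)
      have e1 : ({0, 3, 4, 5} : Finset (Fin 6)) \ ({4, 5} : Finset (Fin 6)) = ({0, 3} : Finset (Fin 6)) := by decide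
      have e2 : 7 + ({4, 5} : Finset (Fin 6)).sup times = 27 := by decide
      rw [e1, e2] at h; exact h
    have h6 : Reach ({0, 1, 3} : Finset (Fin 6)) false 29 := by
      have h := Reach.toA ({0, 3} : Finset (Fin 6)) 27 ({1} : Finset (Fin 6)) h5 (by decide) (by decide) (by decide)
      have e1 : ({0, 3} : Finset (Fin 6)) ∪ ({1} : Finset (Fin 6)) = ({0, 1, 3} : Finset (Fin 6)) := by decide
      have e2 : 27 + ({1} : Finset (Fin 6)).sup times = 29 := by decide
      rw [e1, e2] at h; exact h
    have h7 : Reach ({1} : Finset (Fin 6)) true 34 := by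
      have h := Reach.toB ({0, 1, 3} : Finset (Fin 6)) 29 ({0, 3} : Finset (Fin 6)) h6 (by decide) (by decide) (by decide)
      have e1 : ({0, 1, 3} : Finset (Fin 6)) \ ({0, 3} : Finset (Fin 6)) = ({1} : Finset (Fin 6)) := by decide
      have e2 : 29 + ({0, 3} : Finset (Fin 6)).sup times = 34 := by decide
      rw [e1, e2] at h; exact h
    have h8 : Reach ({0, 1} : Finset (Fin 6)) false 35 := by
      have h := Reach.toA ({1} : Finset (Fin 6)) 34 ({0} : Finset (Fin 6)) h7 (by decide) (by decide) (by decide)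
      have e1 : ({1} : Finset (Fin 6)) ∪ ({0} : Finset (Fin 6)) = ({0, 1} : Finset (Fin 6)) := by decide
      have e2 : 34 + ({0} : Finset (Fin 6)).sup times = 35 := by decide
      rw [e1, e2] at h; exact h
    have h9 : Reach (∅ : Finset (Fin 6)) true 37 := by
      have h := Reach.toB ({0, 1} : Finset (Fin 6)) 35 ({0, 1} : Finset (Fin 6)) h8 (by decide) (by decide) (by decide)
      have e1 : ({0, 1} : Finset (Fin 6)) \ ({0, 1} : Finset (Fin 6)) = (∅ : Finset (Fin 6)) := by decide
      have e2 : 35 + ({0, 1} : Finset (Fin 6)).sup times = 37 := by decide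
      rw [e1, e2] at h; exact h
    exact h9
  · rintro c ⟨b, h⟩
    have hk := key _ _ _ h
    cases b
    · have : fval (∅ : Finset (Fin 6)) false = 1000 := by decide
      omega
    · have : fval (∅ : Finset (Fin 6)) true = 37 := by decide
      omega
end
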